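/- Let K be a field of characteristic 2, R = K[x1,x2,z,u1,u2], and let I be the ideal of R generated by u1 - (z^2 - x1^3*x2^6), u2 - (u1^2 - x1^6*x2^12*z), and u2^2 + x1^12*x2^24*u1. Then the image of (z^2 - x1^3*x2^6)^4 - x1^15*x2^30 in R/I is zero. -/
import Mathlib


open MvPolynomial

/-- With `R = K[x1,x2,z,u1,u2]` (variables `X 0, X 1, X 2, X 3, X 4`), `K` of
characteristic 2, and `I` the ideal generated by `u1 - (z^2 - x1^3 x2^6)`,
`u2 - (u1^2 - x1^6 x2^12 z)` and `u2^2 + x1^12 x2^24 u1`, the image of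
`(z^2 - x1^3 x2^6)^4 - x1^15 x2^30` in `R/I` is zero. -/
theorem stmt5 (K : Type*) [Field K] [CharP K 2] :
    Ideal.Quotient.mk
      (Ideal.span {(X 3 - (X 2 ^ 2 - X 0 ^ 3 * X 1 ^ 6) : MvPolynomial (Fin 5) K),
        X 4 - (X 3 ^ 2 - X 0 ^ 6 * X 1 ^ 12 * X 2),
        X 4 ^ 2 + X 0 ^ 12 * X 1 ^ 24 * X 3})
      ((X 2 ^ 2 - X 0 ^ 3 * X 1 ^ 6) ^ 4 - X 0 ^ 15 * X 1 ^ 30) = 0 := by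
  rw [Ideal.Quotient.eq_zero_iff_mem]
  set R := MvPolynomial (Fin 5) K
  set g1 : R := X 3 - (X 2 ^ 2 - X 0 ^ 3 * X 1 ^ 6) with hg1
  set g2 : R := X 4 - (X 3 ^ 2 - X 0 ^ 6 * X 1 ^ 12 * X 2) with hg2
  set g3 : R := X 4 ^ 2 + X 0 ^ 12 * X 1 ^ 24 * X 3 with hg3
  have h2 : (2 : R) = 0 := by
    have := CharP.cast_eq_zero R 2
    simpa using this
  have m1 : g1 ∈ Ideal.span {g1, g2, g3} := Ideal.subset_span (by simp)
  have m2 : g2 ∈ Ideal.span {g1, g2, g3} := Ideal.subset_span (by simp)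
  have m3 : g3 ∈ Ideal.span {g1, g2, g3} := Ideal.subset_span (by simp)
  set S : R := g2 + g1 * (X 3 + (X 2 ^ 2 - X 0 ^ 3 * X 1 ^ 6)) with hS
  have key : ((X 2 ^ 2 - X 0 ^ 3 * X 1 ^ 6) ^ 4 - X 0 ^ 15 * X 1 ^ 30 : R) =
      g3 - (X 0 ^ 12 * X 1 ^ 24) * g1 - S * S := by
    rw [hS, hg1, hg2, hg3]
    linear_combination ((-1:R)*X 2^4*X 4 + X 2^8 + (2:R)*X 0^3*X 1^6*X 2^2*X 4
      + (-4:R)*X 0^3*X 1^6*X 2^6 + (-1:R)*X 0^6*X 1^12*X 4 + X 0^6*X 1^12*X 2*X 4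
      + (6:R)*X 0^6*X 1^12*X 2^4 + (-1:R)*X 0^6*X 1^12*X 2^5
      + (-4:R)*X 0^9*X 1^18*X 2^2 + (2:R)*X 0^9*X 1^18*X 2^3
      + X 0^12*X 1^24 + (-1:R)*X 0^12*X 1^24*X 2) * h2
  rw [key]
  have mS : S ∈ Ideal.span {g1, g2, g3} :=
    add_mem m2 (Ideal.mul_mem_right _ _ m1)
  exact sub_mem (sub_mem m3 (Ideal.mul_mem_left _ _ m1)) (Ideal.mul_mem_right _ _ mS)
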